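/- Let n ≥ 1 be an integer. Then the Douglas–Rachford operator T satisfies (T T*)^n = (T* T)^n = (P_U P_V P_U)^n + (P_{U^⊥} P_{V^⊥} P_{U^⊥})^n = (P_V P_U P_V)^n + (P_{V^⊥} P_{U^⊥} P_{V^⊥})^n, and moreover P_U (T T*)^n = (P_U P_V)^n P_U = (T T*)^n P_U and P_V (T T*)^n = (P_V P_U)^n P_V = (T T*)^n P_V. -/

import Mathlib

noncomputable section

variable {X : Type*} [NormedAddCommGroup X] [InnerProductSpace ℝ X] [CompleteSpace X]

/-- The orthogonal projection onto a closed subspace `W`, as an operator on `X`. -/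
noncomputable def proj (W : Submodule ℝ X) [W.HasOrthogonalProjection] : X →L[ℝ] X :=
  W.subtypeL.comp W.orthogonalProjectionOnto

instance infHOP (U V : Submodule ℝ X) [CompleteSpace U] [CompleteSpace V] :
    (U ⊓ V).HasOrthogonalProjection := by
  have hU : IsClosed (U : Set X) := (completeSpace_coe_iff_isComplete.mp ‹_›).isClosed
  have hV : IsClosed (V : Set X) := (completeSpace_coe_iff_isComplete.mp ‹_›).isClosed
  have : CompleteSpace (U ⊓ V : Submodule ℝ X) := (hU.inter hV).completeSpace_coe
  infer_instance

/-- The fixed point set `Fix T = {x | T x = x}` of a continuous linear operator `T`,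
as a submodule of `X`. -/
noncomputable def fixedSpace (T : X →L[ℝ] X) : Submodule ℝ X := LinearMap.ker ((T - 1 : X →L[ℝ] X) : X →ₗ[ℝ] X)

instance fixedSpaceHOP (T : X →L[ℝ] X) : (fixedSpace T).HasOrthogonalProjection := by
  have h : IsClosed ((fixedSpace T : Submodule ℝ X) : Set X) := by
    have : ((fixedSpace T : Submodule ℝ X) : Set X) = {x | T x = x} := by
      ext x; simp [fixedSpace, LinearMap.mem_ker, sub_eq_zero]
    rw [this]
    exact isClosed_eq T.continuous continuous_id
  have : CompleteSpace (fixedSpace T) := h.completeSpace_coe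
  infer_instance

/-- The reflector `R_W = 2 P_W − Id` associated with `W`. -/
noncomputable def reflector (W : Submodule ℝ X) [W.HasOrthogonalProjection] : X →L[ℝ] X :=
  2 • proj W - 1

/-- The Douglas–Rachford operator `T = T_{V,U} = P_V (2 P_U − Id) + Id − P_U`.
(The first argument is `U`, the second is `V`.) -/
noncomputable def drOperator (U V : Submodule ℝ X) [U.HasOrthogonalProjection]
    [V.HasOrthogonalProjection] : X →L[ℝ] X :=
  proj V * (2 • proj U - 1) + 1 - proj U

/-- The cosine of the Friedrichs angle between `U` and `V`. -/
noncomputable def friedrichs (U V : Submodule ℝ X) : ℝ :=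
  sSup {c : ℝ | ∃ u v : X, u ∈ U ⊓ (U ⊓ V)ᗮ ∧ v ∈ V ⊓ (U ⊓ V)ᗮ ∧
    ‖u‖ ≤ 1 ∧ ‖v‖ ≤ 1 ∧ c = inner ℝ u v}

/-!
With `p = P_U` and `q = P_V` we have `T = q p + (1 - q)(1 - p)` and `T* = p q + (1 - p)(1 - q)`, so
`T T* = q p q + (1 - q)(1 - p)(1 - q)` and `T* T = p q p + (1 - p)(1 - q)(1 - p)`. For idempotents
both expressions equal `1 - p - q + p q + q p`, which is symmetric in `p` and `q`. The two corners
`p x p` and `(1 - p) y (1 - p)` annihilate each other, so the `n`-th power of their sum is the sum of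
their `n`-th powers, and multiplying by `p` on either side keeps only `(p x p)^n = (p x)^n p`.
-/

lemma add_pow_of_mul_eq_zero {R : Type*} [Semiring R] {a b : R} (hab : a * b = 0)
    (hba : b * a = 0) {n : ℕ} (hn : n ≠ 0) : (a + b) ^ n = a ^ n + b ^ n := by
  induction n, Nat.one_le_iff_ne_zero.mpr hn using Nat.le_induction with
  | base => simp
  | succ k hk ih =>
    have hab' : a ^ k * b = 0 := pow_mul_eq_zero_of_le hk (by rwa [pow_one])
    have hba' : b ^ k * a = 0 := pow_mul_eq_zero_of_le hk (by rwa [pow_one])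
    rw [pow_succ, ih (Nat.one_le_iff_ne_zero.mp hk), add_mul, mul_add, mul_add, hab', hba',
      ← pow_succ, ← pow_succ, add_zero, zero_add]

def douglasRachford {R : Type*} [Ring R] (p q : R) : R := q * p + (1 - q) * (1 - p)

namespace IsIdempotentElem

variable {R : Type*} [Ring R] {p : R}

lemma corner_mul_corner_one_sub (hp : IsIdempotentElem p) (x y : R) :
    p * x * p * ((1 - p) * y * (1 - p)) = 0 := by
  calc p * x * p * ((1 - p) * y * (1 - p)) = p * x * (p * (1 - p)) * y * (1 - p) := by
        simp only [mul_assoc]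
    _ = 0 := by rw [hp.mul_one_sub_self, mul_zero, zero_mul, zero_mul]

lemma corner_one_sub_mul_corner (hp : IsIdempotentElem p) (x y : R) :
    (1 - p) * y * (1 - p) * (p * x * p) = 0 := by
  simpa only [sub_sub_cancel] using hp.one_sub.corner_mul_corner_one_sub y x

lemma corner_pow (hp : IsIdempotentElem p) (x : R) {n : ℕ} (hn : n ≠ 0) :
    (p * x * p) ^ n = (p * x) ^ n * p := by
  induction n, Nat.one_le_iff_ne_zero.mpr hn using Nat.le_induction with
  | base => simp
  | succ k hk ih =>
    rw [pow_succ, ih (Nat.one_le_iff_ne_zero.mp hk), pow_succ, mul_assoc _ p,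
      ← mul_assoc p (p * x), ← mul_assoc p p, hp.eq, ← mul_assoc]

lemma corner_add_corner_pow (hp : IsIdempotentElem p) (x y : R) {n : ℕ} (hn : n ≠ 0) :
    (p * x * p + (1 - p) * y * (1 - p)) ^ n = (p * x * p) ^ n + ((1 - p) * y * (1 - p)) ^ n :=
  add_pow_of_mul_eq_zero (hp.corner_mul_corner_one_sub x y) (hp.corner_one_sub_mul_corner x y) hn

lemma mul_corner_add_corner_pow (hp : IsIdempotentElem p) (x y : R) {n : ℕ} (hn : n ≠ 0) :
    p * (p * x * p + (1 - p) * y * (1 - p)) ^ n = (p * x) ^ n * p := by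
  rw [hp.corner_add_corner_pow x y hn, ← hp.corner_pow x hn]
  set a := p * x * p with ha
  set b := (1 - p) * y * (1 - p) with hb
  have hpa : p * a = a := by simp only [ha, ← mul_assoc, hp.eq]
  have hpb : p * b = 0 := by simp only [hb, ← mul_assoc, hp.mul_one_sub_self, zero_mul]
  clear_value a b
  obtain ⟨k, rfl⟩ := Nat.exists_eq_succ_of_ne_zero hn
  rw [mul_add, pow_succ', pow_succ' b, ← mul_assoc, ← mul_assoc, hpa, hpb, zero_mul, add_zero]

lemma corner_add_corner_pow_mul (hp : IsIdempotentElem p) (x y : R) {n : ℕ} (hn : n ≠ 0) :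
    (p * x * p + (1 - p) * y * (1 - p)) ^ n * p = (p * x) ^ n * p := by
  rw [hp.corner_add_corner_pow x y hn, ← hp.corner_pow x hn]
  set a := p * x * p with ha
  set b := (1 - p) * y * (1 - p) with hb
  have hap : a * p = a := by simp only [ha, mul_assoc, hp.eq]
  have hbp : b * p = 0 := by simp only [hb, mul_assoc, hp.one_sub_mul_self, mul_zero]
  clear_value a b
  obtain ⟨k, rfl⟩ := Nat.exists_eq_succ_of_ne_zero hn
  rw [add_mul, pow_succ, pow_succ b, mul_assoc, mul_assoc, hap, hbp, mul_zero, add_zero]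

lemma corner_add_corner_eq (hp : IsIdempotentElem p) (q : R) :
    p * q * p + (1 - p) * (1 - q) * (1 - p) = 1 - p - q + (p * q + q * p) := by
  have h := hp.eq
  simp only [mul_sub, sub_mul, mul_one, one_mul, mul_assoc, h]
  abel

lemma douglasRachford_mul_swap (hp : IsIdempotentElem p) (q : R) :
    douglasRachford p q * douglasRachford q p = q * p * q + (1 - q) * (1 - p) * (1 - q) := by
  calc douglasRachford p q * douglasRachford q p
      = q * (p * p) * q + q * (p * (1 - p)) * (1 - q) + (1 - q) * ((1 - p) * p) * q
        + (1 - q) * ((1 - p) * (1 - p)) * (1 - q) := by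
        simp only [douglasRachford]; noncomm_ring
    _ = q * p * q + (1 - q) * (1 - p) * (1 - q) := by
        rw [hp.eq, hp.mul_one_sub_self, hp.one_sub_mul_self, hp.one_sub.eq]; noncomm_ring

end IsIdempotentElem

section Projections

variable {E : Type*} [NormedAddCommGroup E] [InnerProductSpace ℝ E]

lemma isIdempotentElem_proj (W : Submodule ℝ E) [W.HasOrthogonalProjection] :
    IsIdempotentElem (proj W) :=
  W.isIdempotentElem_starProjection

lemma proj_orthogonal (W : Submodule ℝ E) [W.HasOrthogonalProjection] :
    proj Wᗮ = 1 - proj W :=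
  W.starProjection_orthogonal'

lemma adjoint_proj [CompleteSpace E] (W : Submodule ℝ E) [W.HasOrthogonalProjection] :
    ContinuousLinearMap.adjoint (proj W) = proj W :=
  (isSelfAdjoint_starProjection W).adjoint_eq

lemma drOperator_eq_douglasRachford (U V : Submodule ℝ E) [U.HasOrthogonalProjection]
    [V.HasOrthogonalProjection] : drOperator U V = douglasRachford (proj U) (proj V) := by
  unfold drOperator douglasRachford
  noncomm_ring

lemma adjoint_drOperator [CompleteSpace E] (U V : Submodule ℝ E) [U.HasOrthogonalProjection]
    [V.HasOrthogonalProjection] : ContinuousLinearMap.adjoint (drOperator U V) = drOperator V U := by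
  rw [drOperator_eq_douglasRachford, drOperator_eq_douglasRachford, douglasRachford,
    douglasRachford, ← ContinuousLinearMap.star_eq_adjoint]
  simp only [star_add, star_mul, star_sub, star_one, ContinuousLinearMap.star_eq_adjoint,
    adjoint_proj]

end Projections

/-- for every integer `n ≥ 1`,
`(T T*)^n = (T* T)^n = (P_U P_V P_U)^n + (P_{U^⊥} P_{V^⊥} P_{U^⊥})^n
= (P_V P_U P_V)^n + (P_{V^⊥} P_{U^⊥} P_{V^⊥})^n`, and moreover
`P_U (T T*)^n = (P_U P_V)^n P_U = (T T*)^n P_U` and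
`P_V (T T*)^n = (P_V P_U)^n P_V = (T T*)^n P_V`. -/
theorem drOperator_mul_adjoint_pow
    (U V : Submodule ℝ X) [CompleteSpace U] [CompleteSpace V] (n : ℕ) (hn : 1 ≤ n) :
    (drOperator U V * ContinuousLinearMap.adjoint (drOperator U V)) ^ n =
      (ContinuousLinearMap.adjoint (drOperator U V) * drOperator U V) ^ n ∧
    (drOperator U V * ContinuousLinearMap.adjoint (drOperator U V)) ^ n =
      (proj U * proj V * proj U) ^ n + (proj Uᗮ * proj Vᗮ * proj Uᗮ) ^ n ∧
    (drOperator U V * ContinuousLinearMap.adjoint (drOperator U V)) ^ n =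
      (proj V * proj U * proj V) ^ n + (proj Vᗮ * proj Uᗮ * proj Vᗮ) ^ n ∧
    proj U * (drOperator U V * ContinuousLinearMap.adjoint (drOperator U V)) ^ n =
      (proj U * proj V) ^ n * proj U ∧
    (proj U * proj V) ^ n * proj U =
      (drOperator U V * ContinuousLinearMap.adjoint (drOperator U V)) ^ n * proj U ∧
    proj V * (drOperator U V * ContinuousLinearMap.adjoint (drOperator U V)) ^ n =
      (proj V * proj U) ^ n * proj V ∧
    (proj V * proj U) ^ n * proj V =
      (drOperator U V * ContinuousLinearMap.adjoint (drOperator U V)) ^ n * proj V := by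
  have hp := isIdempotentElem_proj U
  have hq := isIdempotentElem_proj V
  have hn0 : n ≠ 0 := Nat.one_le_iff_ne_zero.mp hn
  have hTV : drOperator U V * ContinuousLinearMap.adjoint (drOperator U V) =
      proj V * proj U * proj V + (1 - proj V) * (1 - proj U) * (1 - proj V) := by
    rw [adjoint_drOperator, drOperator_eq_douglasRachford, drOperator_eq_douglasRachford,
      hp.douglasRachford_mul_swap]
  have hTU : drOperator U V * ContinuousLinearMap.adjoint (drOperator U V) =
      proj U * proj V * proj U + (1 - proj U) * (1 - proj V) * (1 - proj U) := by
    rw [hTV, hq.corner_add_corner_eq, hp.corner_add_corner_eq, add_comm (proj V * proj U),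
      sub_right_comm]
  have hT'T : ContinuousLinearMap.adjoint (drOperator U V) * drOperator U V =
      proj U * proj V * proj U + (1 - proj U) * (1 - proj V) * (1 - proj U) := by
    rw [adjoint_drOperator, drOperator_eq_douglasRachford, drOperator_eq_douglasRachford,
      hq.douglasRachford_mul_swap]
  rw [proj_orthogonal U, proj_orthogonal V, hT'T]
  refine ⟨by rw [hTU], by rw [hTU, hp.corner_add_corner_pow _ _ hn0],
    by rw [hTV, hq.corner_add_corner_pow _ _ hn0], by rw [hTU, hp.mul_corner_add_corner_pow _ _ hn0],
    by rw [hTU, hp.corner_add_corner_pow_mul _ _ hn0], by rw [hTV, hq.mul_corner_add_corner_pow _ _ hn0],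
    by rw [hTV, hq.corner_add_corner_pow_mul _ _ hn0]⟩
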